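/- Let C = Σ_{p≥0} c_{p+1} be the sum of all left combs (solving C = Y + C/Y = Y + Y/C) and D = Σ_{q≥0} d_{q+1} the sum of all right combs (solving D = Y + D∖Y = Y + Y∖D). Then C + C∖D = D + C/D; both sides equal the sum of all trees of the shape c_p / Y ∖ d_q with p,q ≥ 0. -/

import Mathlib

/-!
Every nonempty tree is `node l r = (l / Y) ∖ r`. A factorization `u / v` of `node l r` is either
`v = |` or `v = node v' r` with `u / v' = l`, and dually for `u ∖ v`. Since `C`, `D` and `Y` vanish
on `|`, each convolution on `node l r` becomes a convolution on `l` (or on `r`) times a coefficient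
read off the other subtree, and `C (node l r) = L l · [r = |]`, `D (node l r) = [l = |] · R r`,
where `L = | + C` and `R = | + D` are the sums of all left and right combs. All identities then
reduce to `L = | + C` and `R = | + D`, except `C = Y + Y / C` and `D = Y + D ∖ Y`, where the
convolution on `l` (resp. `r`) is again one of the same kind and is handled by induction.
-/

/-- Planar binary trees: a leaf, or an internal vertex with two subtrees. -/
inductive PBT : Type
  | leaf : PBT
  | node : PBT → PBT → PBT
  deriving DecidableEq

namespace PBT

/-- Number of internal vertices of a planar binary tree. -/
def size : PBT → ℕ
  | leaf => 0
  | node l r => size l + size r + 1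

/-- `under u v` ("u ∖ v") grafts `v` at the rightmost leaf of `u`. -/
def under : PBT → PBT → PBT
  | leaf, v => v
  | node l r, v => node l (under r v)

/-- `over u v` ("u / v") grafts `u` at the leftmost leaf of `v`. -/
def over' (u : PBT) : PBT → PBT
  | leaf => u
  | node l r => node (over' u l) r

/-- Number of internal vertices on the rightmost path (right spine). -/
def rightSpine : PBT → ℕ
  | leaf => 0
  | node _ r => rightSpine r + 1

/-- The left comb with `p` internal vertices. -/
def leftComb : ℕ → PBT
  | 0 => leaf
  | p + 1 => node (leftComb p) leaf

/-- The right comb with `q` internal vertices. -/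
def rightComb : ℕ → PBT
  | 0 => leaf
  | q + 1 => node leaf (rightComb q)

/-- The list of all factorizations `t = u ∖ v` (each exactly once). -/
def underFactors : PBT → List (PBT × PBT)
  | leaf => [(leaf, leaf)]
  | node l r => (leaf, node l r) :: (underFactors r).map (fun p => (node l p.1, p.2))

/-- The list of all factorizations `t = u / v` (each exactly once). -/
def overFactors : PBT → List (PBT × PBT)
  | leaf => [(leaf, leaf)]
  | node l r => (node l r, leaf) :: (overFactors l).map (fun p => (p.1, node p.2 r))

/-- Convolution of tree-expanded series dual to the over product:
`(A / B)_w = Σ_{s / t = w} A_s B_t`. -/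
def overConv {R : Type*} [CommRing R] (f g : PBT → R) (w : PBT) : R :=
  ((overFactors w).map (fun p => f p.1 * g p.2)).sum

/-- Convolution of tree-expanded series dual to the under product:
`(A ∖ B)_w = Σ_{s ∖ t = w} A_s B_t`. -/
def underConv {R : Type*} [CommRing R] (f g : PBT → R) (w : PBT) : R :=
  ((underFactors w).map (fun p => f p.1 * g p.2)).sum

/-- The list of all planar binary trees with `n` internal vertices. -/
def treesOfSize : ℕ → List PBT
  | 0 => [leaf]
  | n + 1 =>
    (List.range (n + 1)).attach.flatMap (fun i =>
      (treesOfSize i.1).flatMap (fun l =>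
        (treesOfSize (n - i.1)).map (fun r => node l r)))
  termination_by n => n
  decreasing_by
  · exact Nat.lt_succ_of_le (Nat.sub_le _ _)
  · exact List.mem_range.mp i.2

/-- `treePow B t` is the series `B^t = μ_t(B,…,B)`, the substitution of the
series `B` in all internal vertices of `t` (duplicial operad composition),
using the decomposition `l ∨ r = (l / Y) ∖ r`. -/
def treePow {R : Type*} [CommRing R] (B : PBT → R) : PBT → PBT → R
  | leaf => fun w => if w = leaf then 1 else 0
  | node l r => underConv (overConv (treePow B l) B) (treePow B r)

/-- Composition of tree-expanded series: `(A ∘ B)_w = Σ_t A_t (B^t)_w`,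
where only trees with at most `|w|` vertices can contribute. -/
def comp {R : Type*} [CommRing R] (A B : PBT → R) (w : PBT) : R :=
  (((List.range (size w + 1)).flatMap treesOfSize).map
    (fun t => A t * treePow B t w)).sum

/-- The series reduced to the one-vertex tree `Y`. -/
def Yser {R : Type*} [CommRing R] : PBT → R :=
  fun t => if t = node leaf leaf then 1 else 0

/-- The series reduced to the root tree `|` (unit for the over/under products). -/
def unitSer {R : Type*} [CommRing R] : PBT → R :=
  fun t => if t = leaf then 1 else 0

/-- Suspension of a tree-expanded series: the coefficient on a tree with `n`
internal vertices is multiplied by `(-1)^(n-1)`. -/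
def susp {R : Type*} [CommRing R] (A : PBT → R) : PBT → R :=
  fun t => (-1 : R) ^ (size t + 1) * A t

/-- One covering step of the Tamari order: a right rotation
`(a ∨ b) ∨ c ⟶ a ∨ (b ∨ c)` somewhere in the tree. -/
inductive TamariStep : PBT → PBT → Prop
  | rot (a b c : PBT) : TamariStep (node (node a b) c) (node a (node b c))
  | left {l l' : PBT} (r : PBT) : TamariStep l l' → TamariStep (node l r) (node l' r)
  | right (l : PBT) {r r' : PBT} : TamariStep r r' → TamariStep (node l r) (node l r')

/-- The Tamari partial order on planar binary trees. -/
def tle : PBT → PBT → Prop := Relation.ReflTransGen TamariStep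

end PBT

open PBT in
/-- Test whether a tree is a left comb. -/
def isLeftComb : PBT → Bool
  | PBT.leaf => true
  | PBT.node l PBT.leaf => isLeftComb l
  | PBT.node _ (PBT.node _ _) => false

open PBT in
/-- Test whether a tree is a right comb. -/
def isRightComb : PBT → Bool
  | PBT.leaf => true
  | PBT.node PBT.leaf r => isRightComb r
  | PBT.node (PBT.node _ _) _ => false

open PBT in
/-- `C`: the sum of all nonempty left combs. -/
def Cser : PBT → ℚ := fun t => if t ≠ PBT.leaf ∧ isLeftComb t then 1 else 0

open PBT in
/-- `D`: the sum of all nonempty right combs. -/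
def Dser : PBT → ℚ := fun t => if t ≠ PBT.leaf ∧ isRightComb t then 1 else 0

open PBT in
/-- Indicator of trees of the shape `c_p / Y ∖ d_q = node c_p d_q`. -/
def isCombShape : PBT → Bool
  | PBT.leaf => false
  | PBT.node l r => isLeftComb l && isRightComb r

namespace PBT

variable {R : Type*} [CommRing R]

section Convolution

variable (f g h : PBT → R)

@[simp]
lemma overConv_leaf : overConv f g leaf = f leaf * g leaf := by
  simp [overConv, overFactors]

lemma overConv_node (l r : PBT) :
    overConv f g (node l r) = f (node l r) * g leaf + overConv f (fun u => g (node u r)) l := by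
  simp [overConv, overFactors, Function.comp_def]

@[simp]
lemma underConv_leaf : underConv f g leaf = f leaf * g leaf := by
  simp [underConv, underFactors]

lemma underConv_node (l r : PBT) :
    underConv f g (node l r) = f leaf * g (node l r) + underConv (fun u => f (node l u)) g r := by
  simp [underConv, underFactors, Function.comp_def]

lemma overConv_unitSer (t : PBT) : overConv f unitSer t = f t := by
  cases t with
  | leaf => simp [unitSer]
  | node l r =>
    rw [overConv_node]
    simp [overConv, unitSer]

lemma unitSer_underConv (t : PBT) : underConv unitSer f t = f t := by
  cases t with
  | leaf => simp [unitSer]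
  | node l r =>
    rw [underConv_node]
    simp [underConv, unitSer]

lemma overConv_add_right (t : PBT) : overConv f (g + h) t = overConv f g t + overConv f h t := by
  simp [overConv, mul_add, List.sum_map_add]

lemma overConv_mul_const (c : R) (t : PBT) :
    overConv f (fun u => g u * c) t = overConv f g t * c := by
  simp [overConv, ← mul_assoc, List.sum_map_mul_right]

lemma underConv_add_left (t : PBT) :
    underConv (f + g) h t = underConv f h t + underConv g h t := by
  simp [underConv, add_mul, List.sum_map_add]

lemma underConv_const_mul (c : R) (t : PBT) :
    underConv (fun u => c * f u) g t = c * underConv f g t := by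
  simp [underConv, mul_assoc, List.sum_map_mul_left]

end Convolution

@[simp]
lemma Yser_leaf : (Yser leaf : R) = 0 := by
  simp [Yser]

lemma Yser_node (l r : PBT) : (Yser (node l r) : R) = unitSer l * unitSer r := by
  cases l <;> cases r <;> simp [Yser, unitSer]

end PBT

open PBT

def leftCombInd (t : PBT) : ℚ := if isLeftComb t then 1 else 0

def rightCombInd (t : PBT) : ℚ := if isRightComb t then 1 else 0

@[simp]
lemma Cser_leaf : Cser leaf = 0 := by
  simp [Cser]

@[simp]
lemma Dser_leaf : Dser leaf = 0 := by
  simp [Dser]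

lemma Cser_node (l r : PBT) : Cser (node l r) = leftCombInd l * unitSer r := by
  cases r <;> simp [Cser, leftCombInd, unitSer, isLeftComb]

lemma Dser_node (l r : PBT) : Dser (node l r) = unitSer l * rightCombInd r := by
  cases l <;> simp [Dser, rightCombInd, unitSer, isRightComb]

lemma leftCombInd_eq_unitSer_add_Cser : leftCombInd = unitSer + Cser := by
  ext t
  cases t <;> simp [leftCombInd, unitSer, Cser, isLeftComb]

lemma rightCombInd_eq_unitSer_add_Dser : rightCombInd = unitSer + Dser := by
  ext t
  cases t <;> simp [rightCombInd, unitSer, Dser, isRightComb]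

lemma combShape_node (l r : PBT) :
    (if isCombShape (node l r) then 1 else 0 : ℚ) = leftCombInd l * rightCombInd r := by
  simp only [isCombShape, leftCombInd, rightCombInd]
  by_cases hl : isLeftComb l <;> by_cases hr : isRightComb r <;> simp [hl, hr]

lemma Cser_eq_Yser_add_overConv_Cser_Yser (t : PBT) : Cser t = Yser t + overConv Cser Yser t := by
  cases t with
  | leaf => simp
  | node l r =>
    simp only [overConv_node, Yser_leaf, mul_zero, zero_add, Yser_node, overConv_mul_const,
      overConv_unitSer, Cser_node, leftCombInd_eq_unitSer_add_Cser, Pi.add_apply]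
    ring

lemma Cser_eq_Yser_add_overConv_Yser_Cser (t : PBT) : Cser t = Yser t + overConv Yser Cser t := by
  induction t with
  | leaf => simp
  | node l r ihl _ =>
    calc Cser (node l r) = (unitSer l + Cser l) * unitSer r := by
          rw [Cser_node, leftCombInd_eq_unitSer_add_Cser, Pi.add_apply]
      _ = (unitSer l + Yser l + overConv Yser Cser l) * unitSer r := by rw [ihl, add_assoc]
      _ = Yser (node l r) + overConv Yser Cser (node l r) := by
          simp only [overConv_node, Cser_leaf, mul_zero, zero_add, Yser_node, Cser_node]
          rw [overConv_mul_const, leftCombInd_eq_unitSer_add_Cser, overConv_add_right,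
            overConv_unitSer]
          ring

lemma Dser_eq_Yser_add_underConv_Dser_Yser (t : PBT) :
    Dser t = Yser t + underConv Dser Yser t := by
  induction t with
  | leaf => simp
  | node l r _ ihr =>
    calc Dser (node l r) = unitSer l * (unitSer r + Dser r) := by
          rw [Dser_node, rightCombInd_eq_unitSer_add_Dser, Pi.add_apply]
      _ = unitSer l * (unitSer r + Yser r + underConv Dser Yser r) := by rw [ihr, add_assoc]
      _ = Yser (node l r) + underConv Dser Yser (node l r) := by
          simp only [underConv_node, Dser_leaf, zero_mul, zero_add, Yser_node, Dser_node]
          rw [underConv_const_mul, rightCombInd_eq_unitSer_add_Dser, underConv_add_left,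
            unitSer_underConv]
          ring

lemma Dser_eq_Yser_add_underConv_Yser_Dser (t : PBT) :
    Dser t = Yser t + underConv Yser Dser t := by
  cases t with
  | leaf => simp
  | node l r =>
    simp only [underConv_node, Yser_leaf, zero_mul, zero_add, Yser_node, underConv_const_mul,
      unitSer_underConv, Dser_node, rightCombInd_eq_unitSer_add_Dser, Pi.add_apply]
    ring

lemma Cser_add_underConv_Cser_Dser (t : PBT) :
    Cser t + underConv Cser Dser t = if isCombShape t then 1 else 0 := by
  cases t with
  | leaf => simp [isCombShape]
  | node l r =>
    simp only [underConv_node, Cser_leaf, zero_mul, zero_add, Cser_node, underConv_const_mul,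
      unitSer_underConv, combShape_node, rightCombInd_eq_unitSer_add_Dser, Pi.add_apply]
    ring

lemma Dser_add_overConv_Cser_Dser (t : PBT) :
    Dser t + overConv Cser Dser t = if isCombShape t then 1 else 0 := by
  cases t with
  | leaf => simp [isCombShape]
  | node l r =>
    simp only [overConv_node, Dser_leaf, mul_zero, zero_add, Dser_node, overConv_mul_const,
      overConv_unitSer, combShape_node, leftCombInd_eq_unitSer_add_Cser, Pi.add_apply]
    ring

/-- `C` solves `C = Y + C/Y = Y + Y/C`, `D` solves
`D = Y + D∖Y = Y + Y∖D`, one has `C + C∖D = D + C/D`, and both sides are the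
sum of all trees of the shape `c_p / Y ∖ d_q` with `p, q ≥ 0`. -/
theorem comb_series_identity :
    (∀ t : PBT, Cser t = Yser t + overConv Cser Yser t ∧
      Cser t = Yser t + overConv Yser Cser t) ∧
    (∀ t : PBT, Dser t = Yser t + underConv Dser Yser t ∧
      Dser t = Yser t + underConv Yser Dser t) ∧
    (∀ t : PBT,
      Cser t + underConv Cser Dser t = Dser t + overConv Cser Dser t) ∧
    (∀ t : PBT,
      Cser t + underConv Cser Dser t = if isCombShape t then 1 else 0) :=
  ⟨fun t => ⟨Cser_eq_Yser_add_overConv_Cser_Yser t, Cser_eq_Yser_add_overConv_Yser_Cser t⟩,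
    fun t => ⟨Dser_eq_Yser_add_underConv_Dser_Yser t, Dser_eq_Yser_add_underConv_Yser_Dser t⟩,
    fun t => (Cser_add_underConv_Cser_Dser t).trans (Dser_add_overConv_Cser_Dser t).symm,
    Cser_add_underConv_Cser_Dser⟩
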